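/- Let S be a finite set of points in the plane with |S| ≥ 3, and let P be a set of points containing S. Then S consists of the extreme points of its convex hull and the convex hull of S contains no point of P outside S, if and only if the same two conditions hold for every 3-element subset t of S (i.e., every triangle with vertices in S is non-degenerate and empty with respect to P). -/

import Mathlib

abbrev Point : Type := EuclideanSpace ℝ (Fin 2)

noncomputable def Point.x (p : Point) : ℝ := p 0
noncomputable def Point.y (p : Point) : ℝ := p 1

noncomputable def Point.mk' (a b : ℝ) : Point := WithLp.toLp 2 ![a, b]

inductive Orient : Type where
  | cw
  | ccw
  | collinear
deriving DecidableEq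

def Orient.neg : Orient → Orient
  | .cw => .ccw
  | .ccw => .cw
  | .collinear => .collinear

noncomputable def σ (p q r : Point) : Orient :=
  let det := Matrix.det !![p.x, q.x, r.x; p.y, q.y, r.y; 1, 1, 1]
  if 0 < det then .ccw
  else if det < 0 then .cw
  else .collinear

def EmptyShapeIn (S P : Set Point) : Prop :=
  ∀ p ∈ P \ S, p ∉ convexHull ℝ S

def ConvexPoints (S : Set Point) : Prop :=
  ∀ a ∈ S, a ∉ convexHull ℝ (S \ {a})

def ConvexEmptyIn (S P : Set Point) : Prop :=
  ConvexPoints S ∧ EmptyShapeIn S P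

def HasEmptyKGon (k : ℕ) (S : Set Point) : Prop :=
  ∃ s : Finset Point, s.card = k ∧ ↑s ⊆ S ∧ ConvexEmptyIn ↑s S

def PtInTriangle (a p q r : Point) : Prop :=
  a ∈ convexHull ℝ {p, q, r}

def σPtInTriangle (a p q r : Point) : Prop :=
  σ p q a = σ p q r ∧ σ p a r = σ p q r ∧ σ a q r = σ p q r

def σIsEmptyTriangleFor (a b c : Point) (S : Set Point) : Prop :=
  ∀ s ∈ S, ¬σPtInTriangle s a b c

def σHasEmptyKGon (k : ℕ) (S : Set Point) : Prop :=
  ∃ s : Finset Point, s.card = k ∧ ↑s ⊆ S ∧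
    ∀ a ∈ s, ∀ b ∈ s, ∀ c ∈ s, a ≠ b → a ≠ c → b ≠ c → σIsEmptyTriangleFor a b c S

def InGenPos₃ (p q r : Point) : Prop := σ p q r ≠ .collinear

def InGenPos₄ (p q r s : Point) : Prop :=
  InGenPos₃ p q r ∧ InGenPos₃ p q s ∧ InGenPos₃ p r s ∧ InGenPos₃ q r s

def ListInGenPos (l : List Point) : Prop :=
  ∀ p q r : Point, [p, q, r].Sublist l → InGenPos₃ p q r

def Sorted₄ (p q r s : Point) : Prop :=
  p.x < q.x ∧ q.x < r.x ∧ r.x < s.x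

noncomputable def ptSlope (a b : Point) : ℝ := (b.y - a.y) / (b.x - a.x)


lemma mem_hull_small {S : Set Point} {x : Point} (hx : x ∈ convexHull ℝ S) :
    ∃ t : Finset Point, ↑t ⊆ S ∧ t.card ≤ 3 ∧ x ∈ convexHull ℝ (↑t : Set Point) := by
  rw [convexHull_eq_union] at hx
  simp only [Set.mem_iUnion] at hx
  obtain ⟨t, hts, hai, hxt⟩ := hx
  refine ⟨t, hts, ?_, hxt⟩
  have h := hai.card_le_finrank_succ
  have h2 : Module.finrank ℝ (vectorSpan ℝ (Set.range ((↑) : t → Point))) ≤ 2 := by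
    have h3 := Submodule.finrank_le (vectorSpan ℝ (Set.range ((↑) : t → Point)))
    simpa [Point, finrank_euclideanSpace_fin] using h3
  rw [Fintype.card_coe] at h
  omega

theorem ConvexEmptyIn.iff_triangles' {s : Finset Point} {P : Set Point}
    (sP : ↑s ⊆ P) (sz : 3 ≤ s.card) :
    ConvexEmptyIn ↑s P ↔
      ∀ t : Finset Point, t.card = 3 → t ⊆ s → ConvexEmptyIn ↑t P := by
  constructor
  · rintro ⟨hcv, hem⟩ t ht3 hts
    constructor
    · intro a hat hahull
      exact hcv a (hts hat) (convexHull_mono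
        (Set.diff_subset_diff_left (by exact_mod_cast hts)) hahull)
    · intro p hp hphull
      have hps : p ∈ convexHull ℝ (↑s : Set Point) :=
        convexHull_mono (by exact_mod_cast hts) hphull
      by_cases hmem : p ∈ (↑s : Set Point)
      · refine hcv p hmem (convexHull_mono ?_ hphull)
        intro x hx
        exact ⟨hts (by exact_mod_cast hx), fun hxp => hp.2 (by rwa [hxp] at hx)⟩
      · exact hem p ⟨hp.1, hmem⟩ hps
  · intro H
    have : DecidableEq Point := Classical.decEq _
    constructor
    · intro a has hahull
      obtain ⟨t, hts, htc, hat⟩ := mem_hull_small hahull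
      rcases Nat.lt_or_ge t.card 3 with hlt | hge
      · -- extend t ∪ {a} to a 3-subset of s
        have hsub : insert a t ⊆ s := by
          intro x hx
          rcases Finset.mem_insert.mp hx with rfl | hx
          · exact has
          · exact (hts hx).1
        have hcard : (insert a t).card ≤ 3 := by
          have := Finset.card_insert_le a t
          omega
        obtain ⟨u, hu1, hu2, hu3⟩ := Finset.exists_subsuperset_card_eq hsub hcard sz
        have := (H u hu3 hu2).1 a (by
          exact_mod_cast hu1 (Finset.mem_insert_self a t))
        apply this
        refine convexHull_mono ?_ hat
        intro x hx
        have hxt : x ∈ t := hx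
        refine ⟨by exact_mod_cast hu1 (Finset.mem_insert_of_mem hxt), ?_⟩
        intro hxa
        exact (hts hxt).2 hxa
      · have ht3 : t.card = 3 := le_antisymm htc hge
        have htss : t ⊆ s := fun x hx => (hts hx).1
        have hanot : a ∉ (↑t : Set Point) := fun hx => (hts hx).2 rfl
        exact (H t ht3 htss).2 a ⟨sP has, hanot⟩ hat
    · intro p hp hphull
      obtain ⟨t, hts, htc, hpt⟩ := mem_hull_small hphull
      have htss : t ⊆ s := by exact_mod_cast hts
      obtain ⟨u, hu1, hu2, hu3⟩ := Finset.exists_subsuperset_card_eq htss htc sz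
      refine (H u hu3 hu2).2 p ⟨hp.1, fun hx => hp.2 (hu2 hx)⟩ ?_
      exact convexHull_mono (by exact_mod_cast hu1) hpt

theorem ConvexEmptyIn.iff_triangles {s : Finset Point} {P : Set Point}
    (sP : ↑s ⊆ P) (sz : 3 ≤ s.card) :
    ConvexEmptyIn ↑s P ↔
      ∀ t : Finset Point, t.card = 3 → t ⊆ s → ConvexEmptyIn ↑t P := ConvexEmptyIn.iff_triangles' sP sz
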